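/- arXiv:2512.18444 — 5 statements merged into one kernel-verified Lean document; each statement's English description precedes it below -/
import Mathlib

section
/- Let m be a natural number, N : Fin m → ℕ, and let q : Fin m → ℝ satisfy q_j ≥ 0 for all j and Σ_{j<m} q_j ≤ 1. Suppose the next state equals N + e_j (the j-th coordinate incremented by one) with probability q_j for each j, and equals N with probability 1 − Σ_j q_j. Then the expected potential of the next state equals Φ(N) + Σ_{j<m} q_j·(2·N_j + 1), and hence is at least Φ(N) + Σ_{j<m} q_j; in particular, if Σ_{j<m} q_j > 0 the expected potential of the next state is strictly greater than Φ(N). (Strict Submartingale Property, one-step form.) -/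
open Finset

/-- **Strict Submartingale Property (one-step form).** With lock probabilities
`q j ≥ 0`, `∑ j, q j ≤ 1`, the expected potential of the next state (which is
`N` with coordinate `j` incremented with probability `q j`, and `N` itself with
probability `1 - ∑ j, q j`) equals `Φ(N) + ∑ j, q j * (2 * N j + 1)`, hence is at
least `Φ(N) + ∑ j, q j`, and is strictly greater than `Φ(N)` whenever `∑ j, q j > 0`.
Here `Φ(N) = ∑ j, (N j)^2`. -/
theorem strict_submartingale_one_step (m : ℕ) (N : Fin m → ℕ) (q : Fin m → ℝ)
    (hq0 : ∀ j, 0 ≤ q j) (hq1 : ∑ j, q j ≤ 1)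
    (Φ : (Fin m → ℕ) → ℝ) (hΦ : ∀ M : Fin m → ℕ, Φ M = ∑ j, ((M j : ℝ)) ^ 2)
    (E : ℝ)
    (hE : E = (∑ j, q j * Φ (Function.update N j (N j + 1))) + (1 - ∑ j, q j) * Φ N) :
    E = Φ N + ∑ j, q j * (2 * (N j : ℝ) + 1) ∧
    Φ N + ∑ j, q j ≤ E ∧
    (0 < ∑ j, q j → Φ N < E) := by
  have key : ∀ j, Φ (Function.update N j (N j + 1)) = Φ N + (2 * (N j : ℝ) + 1) := by
    intro j
    rw [hΦ, hΦ]
    have h1 : ∑ i, ((Function.update N j (N j + 1) i : ℝ)) ^ 2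
        = ∑ i, (((N i : ℝ)) ^ 2 + if i = j then 2 * (N j : ℝ) + 1 else 0) := by
      apply Finset.sum_congr rfl
      intro i _
      by_cases h : i = j
      · subst h
        simp [Function.update_self]
        push_cast
        ring
      · simp [Function.update_of_ne h, h]
    rw [h1, Finset.sum_add_distrib, Finset.sum_ite_eq' univ j]
    simp
  have hmain : E = Φ N + ∑ j, q j * (2 * (N j : ℝ) + 1) := by
    rw [hE]
    have : ∑ j, q j * Φ (Function.update N j (N j + 1))
        = ∑ j, (q j * Φ N + q j * (2 * (N j : ℝ) + 1)) := by
      apply Finset.sum_congr rfl; intro j _; rw [key j]; ring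
    rw [this, Finset.sum_add_distrib, ← Finset.sum_mul]
    ring
  refine ⟨hmain, ?_, ?_⟩
  · rw [hmain]
    have : ∑ j, q j ≤ ∑ j, q j * (2 * (N j : ℝ) + 1) := by
      apply Finset.sum_le_sum
      intro j _
      nlinarith [hq0 j, Nat.cast_nonneg (α := ℝ) (N j)]
    linarith
  · intro hpos
    rw [hmain]
    have : ∑ j, q j ≤ ∑ j, q j * (2 * (N j : ℝ) + 1) := by
      apply Finset.sum_le_sum
      intro j _
      nlinarith [hq0 j, Nat.cast_nonneg (α := ℝ) (N j)]
    linarith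
end

section
/- Fix natural numbers m ≥ 2 and k ≥ 1. Let Π be a profile of k ballots over m candidates, let p be a candidate, and let Π' be a p-raise of Π. Then: (i) B(p,Π') > B(p,Π); (ii) B(q,Π') ≤ B(q,Π) for every candidate q ≠ p; (iii) t(p,Π') ≥ t(p,Π); and (iv) t(q,Π') ≤ t(q,Π) for every candidate q ≠ p. (Score-change lemma underlying the monotonicity of CHB.) -/
open Finset

/-- A ballot over `m` candidates: a bijection assigning to each candidate its rank,
with rank `0` the most preferred. -/
abbrev Ballot (m : ℕ) := Fin m ≃ Fin m

/-- A profile of `k` ballots over `m` candidates. -/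
abbrev Profile (m k : ℕ) := Fin k → Ballot m

/-- The Borda score of candidate `p` in profile `A`: `∑ i, (m - 1 - rank_i(p))`. -/
def borda {m k : ℕ} (A : Profile m k) (p : Fin m) : ℕ :=
  ∑ i, (m - 1 - ((A i) p : ℕ))

/-- The first-place count of candidate `p` in profile `A`. -/
def firstCount {m k : ℕ} (A : Profile m k) (p : Fin m) : ℕ :=
  (Finset.univ.filter (fun i => ((A i) p : ℕ) = 0)).card

/-- `A'` is a `p`-raise of `A`: a single voter `i₀` strictly improves the rank of `p`
while preserving the relative order of all other candidates. -/
def IsPRaise {m k : ℕ} (p : Fin m) (A A' : Profile m k) : Prop :=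
  ∃ i₀ : Fin k,
    (∀ i, i ≠ i₀ → A' i = A i) ∧
    ((A' i₀) p : ℕ) < ((A i₀) p : ℕ) ∧
    ∀ q q' : Fin m, q ≠ p → q' ≠ p →
      (((A' i₀) q : ℕ) < ((A' i₀) q' : ℕ) ↔ ((A i₀) q : ℕ) < ((A i₀) q' : ℕ))

lemma Equiv.card_filter_apply_lt_apply {α : Type*} [Fintype α] {m : ℕ} (e : α ≃ Fin m) (q : α) :
    #{c | e c < e q} = e q := by
  rw [card_equiv e (t := {i : Fin m | (i : ℕ) < e q})
      fun c => by simp only [mem_filter, mem_univ, true_and, Fin.lt_def],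
    Fin.card_filter_val_lt, min_eq_right (e q).is_lt.le]

/-- Both ranks of `q` count the same candidates other than `p` above `q`, and `p` can only pass
from below `q` to above it. -/
lemma rank_le_of_raise {α : Type*} [Fintype α] [DecidableEq α] {m : ℕ} {e e' : α ≃ Fin m}
    {p : α} (hp : e' p < e p) (hord : ∀ q q', q ≠ p → q' ≠ p → (e' q < e' q' ↔ e q < e q'))
    {q : α} (hq : q ≠ p) : e q ≤ e' q := by
  have split_p : ∀ f : α ≃ Fin m,
      (f q : ℕ) = #{c ∈ univ.erase p | f c < f q} + if f p < f q then 1 else 0 := by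
    intro f
    rw [← f.card_filter_apply_lt_apply, ← insert_erase (mem_univ p), filter_insert]
    split_ifs <;> simp [card_insert_of_notMem]
  have others_agree : #{c ∈ univ.erase p | e' c < e' q} = #{c ∈ univ.erase p | e c < e q} :=
    congrArg card <| filter_congr fun c hc => hord c q (ne_of_mem_erase hc) hq
  have hpq : e' p ≠ e' q := e'.injective.ne (Ne.symm hq)
  have h := split_p e
  have h' := split_p e'
  split_ifs at h h' <;> omega

section Profile

variable {m k : ℕ} {A A' : Profile m k} {q : Fin m}

lemma rank_le_of_forall_ne_eq {i₀ : Fin k} (hoff : ∀ i, i ≠ i₀ → A' i = A i)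
    (hq : A' i₀ q ≤ A i₀ q) (i : Fin k) : A' i q ≤ A i q := by
  rcases eq_or_ne i i₀ with rfl | hi
  · exact hq
  · rw [hoff i hi]

lemma borda_le_borda_of_rank_le (h : ∀ i, A' i q ≤ A i q) : borda A q ≤ borda A' q :=
  sum_le_sum fun i _ => Nat.sub_le_sub_left (h i) _

lemma borda_lt_borda_of_rank_lt (h : ∀ i, A' i q ≤ A i q) {i₀ : Fin k}
    (hi₀ : A' i₀ q < A i₀ q) : borda A q < borda A' q := by
  refine sum_lt_sum (fun i _ => Nat.sub_le_sub_left (h i) _) ⟨i₀, mem_univ i₀, ?_⟩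
  have := (A i₀ q).isLt
  omega

lemma firstCount_le_firstCount_of_rank_le (h : ∀ i, A' i q ≤ A i q) :
    firstCount A q ≤ firstCount A' q :=
  card_le_card <| monotone_filter_right _ fun i _ hi => by
    have := h i
    omega

end Profile

theorem score_change_of_pRaise_general {m k : ℕ}
    (A A' : Profile m k) (p : Fin m) (hraise : IsPRaise p A A') :
    borda A p < borda A' p ∧
    (∀ q : Fin m, q ≠ p → borda A' q ≤ borda A q) ∧
    firstCount A p ≤ firstCount A' p ∧
    (∀ q : Fin m, q ≠ p → firstCount A' q ≤ firstCount A q) := by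
  obtain ⟨i₀, hoff, hp, hord⟩ := hraise
  have hp_le : ∀ i, A' i p ≤ A i p := rank_le_of_forall_ne_eq hoff hp.le
  have hq_le : ∀ q, q ≠ p → ∀ i, A i q ≤ A' i q := fun q hq =>
    rank_le_of_forall_ne_eq (fun i hi => (hoff i hi).symm) (rank_le_of_raise hp hord hq)
  exact ⟨borda_lt_borda_of_rank_lt hp_le hp,
    fun q hq => borda_le_borda_of_rank_le (hq_le q hq),
    firstCount_le_firstCount_of_rank_le hp_le,
    fun q hq => firstCount_le_firstCount_of_rank_le (hq_le q hq)⟩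

/-- **Score-change lemma underlying the monotonicity of CHB.** For any `p`-raise `A'`
of a profile `A` of `k ≥ 1` ballots over `m ≥ 2` candidates:
(i) the Borda score of `p` strictly increases; (ii) the Borda score of every other
candidate does not increase; (iii) the first-place count of `p` does not decrease;
(iv) the first-place count of every other candidate does not increase. -/
theorem score_change_of_pRaise {m k : ℕ} (hm : 2 ≤ m) (hk : 1 ≤ k)
    (A A' : Profile m k) (p : Fin m) (hraise : IsPRaise p A A') :
    borda A p < borda A' p ∧
    (∀ q : Fin m, q ≠ p → borda A' q ≤ borda A q) ∧
    firstCount A p ≤ firstCount A' p ∧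
    (∀ q : Fin m, q ≠ p → firstCount A' q ≤ firstCount A q) :=
  score_change_of_pRaise_general A A' p hraise
end

section
/- Fix natural numbers m ≥ 2 and k ≥ 1 and a real λ with 0 ≤ λ < 1. Let Π be a profile of k ballots over m candidates, let p be a candidate, and let Π' be a p-raise of Π. Then H(p,Π') > H(p,Π), and H(q,Π') ≤ H(q,Π) for every candidate q ≠ p. -/
open Finset

/-- The hybrid score of candidate `p`:
`H(p,A) = (1 - λ) * B(p,A) / (k * (m - 1)) + λ * t(p,A) / k`. -/
noncomputable def hybrid {m k : ℕ} (lam : ℝ) (A : Profile m k) (p : Fin m) : ℝ :=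
  (1 - lam) * (borda A p : ℝ) / ((k : ℝ) * ((m : ℝ) - 1)) +
    lam * (firstCount A p : ℝ) / (k : ℝ)

lemma rank_count {m : ℕ} (σ : Ballot m) (q : Fin m) :
    (univ.filter fun x => (σ x : ℕ) < (σ q : ℕ)).card = (σ q : ℕ) := by
  have h : (univ.filter fun x => (σ x : ℕ) < (σ q : ℕ)).image σ
      = univ.filter fun y : Fin m => (y : ℕ) < (σ q : ℕ) := by
    ext y
    simp only [mem_image, mem_filter, mem_univ, true_and]
    constructor
    · rintro ⟨x, hx, rfl⟩; exact hx
    · intro hy; exact ⟨σ.symm y, by simpa using hy, by simp⟩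
  have h2 := congrArg Finset.card h
  rw [Finset.card_image_of_injective _ σ.injective] at h2
  rw [h2]
  have : (univ.filter fun y : Fin m => (y : ℕ) < (σ q : ℕ)) = Finset.Iio (σ q) := by
    ext y; simp only [mem_filter, mem_univ, true_and, Finset.mem_Iio, Fin.lt_def]
  rw [this, Fin.card_Iio]

lemma rank_split {m : ℕ} (σ : Ballot m) (p q : Fin m) :
    (σ q : ℕ) = (((univ.erase p)).filter fun x => (σ x : ℕ) < (σ q : ℕ)).card
      + (if (σ p : ℕ) < (σ q : ℕ) then 1 else 0) := by
  conv_lhs => rw [← rank_count σ q]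
  by_cases hP : (σ p : ℕ) < (σ q : ℕ)
  · rw [if_pos hP]
    have : univ.filter (fun x => (σ x : ℕ) < (σ q : ℕ))
        = insert p ((univ.erase p).filter fun x => (σ x : ℕ) < (σ q : ℕ)) := by
      ext x
      simp only [mem_filter, mem_univ, true_and, mem_insert, mem_erase]
      by_cases hxp : x = p
      · subst hxp; simp [hP]
      · simp [hxp]
    rw [this, Finset.card_insert_of_notMem (by simp)]
  · rw [if_neg hP, Nat.add_zero]
    congr 1
    ext x
    simp only [mem_filter, mem_univ, true_and, mem_erase]
    by_cases hxp : x = p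
    · subst hxp; simp [hP]
    · simp [hxp]

lemma rank_le_of_raise_s10 {m : ℕ} (σ τ : Ballot m) (p q : Fin m) (hq : q ≠ p)
    (hp : (τ p : ℕ) < (σ p : ℕ))
    (hord : ∀ a b : Fin m, a ≠ p → b ≠ p →
      ((τ a : ℕ) < (τ b : ℕ) ↔ (σ a : ℕ) < (σ b : ℕ))) :
    (σ q : ℕ) ≤ (τ q : ℕ) := by
  have hN : (((univ.erase p)).filter fun x => (τ x : ℕ) < (τ q : ℕ)).card
      = (((univ.erase p)).filter fun x => (σ x : ℕ) < (σ q : ℕ)).card := by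
    congr 1
    apply Finset.filter_congr
    intro x hx
    simp only [Finset.mem_erase] at hx
    simpa using hord x q hx.1 hq
  have hsσ := rank_split σ p q
  have hsτ := rank_split τ p q
  rw [hN] at hsτ
  set N := (((univ.erase p)).filter fun x => (σ x : ℕ) < (σ q : ℕ)).card
  by_cases h1 : (σ p : ℕ) < (σ q : ℕ)
  · rw [if_pos h1] at hsσ
    by_cases h2 : (τ p : ℕ) < (τ q : ℕ)
    · rw [if_pos h2] at hsτ; omega
    · rw [if_neg h2] at hsτ; omega
  · rw [if_neg h1] at hsσ
    by_cases h2 : (τ p : ℕ) < (τ q : ℕ)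
    · rw [if_pos h2] at hsτ; omega
    · rw [if_neg h2] at hsτ; omega

/-- For `0 ≤ λ < 1`, a `p`-raise strictly increases the hybrid score of `p` and does
not increase the hybrid score of any other candidate. -/
theorem hybrid_change_of_pRaise {m k : ℕ} (hm : 2 ≤ m) (hk : 1 ≤ k)
    (lam : ℝ) (hlam0 : 0 ≤ lam) (hlam1 : lam < 1)
    (A A' : Profile m k) (p : Fin m) (hraise : IsPRaise p A A') :
    hybrid lam A p < hybrid lam A' p ∧
    ∀ q : Fin m, q ≠ p → hybrid lam A' q ≤ hybrid lam A q := by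
  obtain ⟨i₀, hoth, hplt, hord⟩ := hraise
  have hk0 : (0:ℝ) < (k : ℝ) := by exact_mod_cast hk
  have hm2 : (2:ℝ) ≤ (m : ℝ) := by exact_mod_cast hm
  have hm1 : (0:ℝ) < (m:ℝ) - 1 := by linarith
  have hD : 0 < (k:ℝ) * ((m:ℝ) - 1) := mul_pos hk0 hm1
  have h1l : 0 < 1 - lam := by linarith
  -- Borda score of p strictly increases
  have hB : borda A p < borda A' p := by
    unfold borda
    apply Finset.sum_lt_sum
    · intro i _
      by_cases hi : i = i₀
      · subst hi
        have := hplt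
        omega
      · rw [hoth i hi]
    · refine ⟨i₀, Finset.mem_univ _, ?_⟩
      have h1 : ((A i₀) p : ℕ) < m := (A i₀ p).is_lt
      omega
  -- first count of p does not decrease
  have ht : firstCount A p ≤ firstCount A' p := by
    unfold firstCount
    apply Finset.card_le_card
    intro i hi
    simp only [Finset.mem_filter, Finset.mem_univ, true_and] at hi ⊢
    by_cases h : i = i₀
    · subst h; omega
    · rw [hoth i h] at *; exact hi
  constructor
  · unfold hybrid
    apply add_lt_add_of_lt_of_le
    · have hBc : (borda A p : ℝ) < (borda A' p : ℝ) := by exact_mod_cast hB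
      apply div_lt_div_of_pos_right _ hD
      exact mul_lt_mul_of_pos_left hBc h1l
    · have htc : (firstCount A p : ℝ) ≤ (firstCount A' p : ℝ) := by exact_mod_cast ht
      gcongr
  · intro q hq
    have hrank : ((A i₀) q : ℕ) ≤ ((A' i₀) q : ℕ) :=
      rank_le_of_raise_s10 (A i₀) (A' i₀) p q hq hplt (fun a b ha hb => hord a b ha hb)
    have hBq : borda A' q ≤ borda A q := by
      unfold borda
      apply Finset.sum_le_sum
      intro i _
      by_cases hi : i = i₀
      · subst hi; omega
      · rw [hoth i hi]
    have htq : firstCount A' q ≤ firstCount A q := by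
      unfold firstCount
      apply Finset.card_le_card
      intro i hi
      simp only [Finset.mem_filter, Finset.mem_univ, true_and] at hi ⊢
      by_cases h : i = i₀
      · subst h; omega
      · rw [← hoth i h]; exact hi
    unfold hybrid
    have hBqc : (borda A' q : ℝ) ≤ (borda A q : ℝ) := by exact_mod_cast hBq
    have htqc : (firstCount A' q : ℝ) ≤ (firstCount A q : ℝ) := by exact_mod_cast htq
    gcongr
end

section
/- Fix natural numbers m ≥ 2 and k ≥ 1 and a real α ∈ [0,1]. Let Π be a profile of k ballots over m candidates and let p be a candidate such that B(p,Π) > B(q,Π) for every q ≠ p (p is the unique Borda winner) and t(p,Π) ≥ ⌈α·k⌉ (p is α-popular). Then for any p-raise Π' of Π, p remains the unique Borda winner, i.e. B(p,Π') > B(q,Π') for every q ≠ p, and remains α-popular, i.e. t(p,Π') ≥ ⌈α·k⌉. (Case 1 of the monotonicity of CHB: an α-popular Borda winner stays the CHB winner.) -/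
open Finset

lemma rank_card {m : ℕ} (r : Fin m ≃ Fin m) (q : Fin m) :
    (Finset.univ.filter fun x => ((r x : ℕ) < (r q : ℕ))).card = (r q : ℕ) := by
  have h1 : (Finset.univ.filter fun x => ((r x : ℕ) < (r q : ℕ))).card
      = (Finset.univ.filter fun y : Fin m => ((y : ℕ) < (r q : ℕ))).card := by
    apply Finset.card_bij (fun x _ => r x)
    · intro a ha; simp only [mem_filter, mem_univ, true_and] at ha ⊢; exact ha
    · intro a _ b _ h; exact r.injective h
    · intro b hb
      refine ⟨r.symm b, ?_, by simp⟩
      simp only [mem_filter, mem_univ, true_and, Equiv.apply_symm_apply] at hb ⊢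
      exact hb
  rw [h1]
  have h2 : (Finset.univ.filter fun y : Fin m => ((y : ℕ) < (r q : ℕ))) = Finset.Iio (r q) := by
    ext y; simp only [mem_filter, mem_univ, true_and, mem_Iio, Fin.lt_iff_val_lt_val]
  rw [h2, Fin.card_Iio]

lemma rank_mono {m : ℕ} (r r' : Fin m ≃ Fin m) (p q : Fin m) (hq : q ≠ p)
    (hp : ((r' p : ℕ)) < (r p : ℕ))
    (hpres : ∀ a b : Fin m, a ≠ p → b ≠ p → (((r' a : ℕ)) < (r' b : ℕ) ↔ ((r a : ℕ)) < (r b : ℕ))) :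
    (r q : ℕ) ≤ (r' q : ℕ) := by
  set T : Finset (Fin m) := Finset.univ.filter fun x => ((r x : ℕ) < (r q : ℕ)) with hT
  set T' : Finset (Fin m) := Finset.univ.filter fun x => ((r' x : ℕ) < (r' q : ℕ)) with hT'
  have hcT : T.card = (r q : ℕ) := rank_card r q
  have hcT' : T'.card = (r' q : ℕ) := rank_card r' q
  have hSS : T.erase p = T'.erase p := by
    ext x
    simp only [mem_erase, hT, hT', mem_filter, mem_univ, true_and]
    constructor
    · rintro ⟨hxp, hx⟩; exact ⟨hxp, (hpres x q hxp hq).mpr hx⟩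
    · rintro ⟨hxp, hx⟩; exact ⟨hxp, (hpres x q hxp hq).mp hx⟩
  by_cases hpT : p ∈ T
  · by_cases hpT' : p ∈ T'
    · have hsub : T ⊆ T' := by
        intro x hx
        by_cases hxp : x = p
        · subst hxp; exact hpT'
        · exact erase_subset p T' (hSS ▸ (mem_erase.mpr ⟨hxp, hx⟩))
      rw [← hcT, ← hcT']; exact Finset.card_le_card hsub
    · exfalso
      have hTe : T'.erase p = T' := Finset.erase_eq_of_notMem hpT'
      have hc1 : T'.card = T.card - 1 := by
        rw [← hTe, ← hSS, Finset.card_erase_of_mem hpT]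
      have hrp : (r p : ℕ) < (r q : ℕ) := by
        have := hpT; simp only [hT, mem_filter, mem_univ, true_and] at this; exact this
      have : (r' p : ℕ) < (r' q : ℕ) := by
        rw [← hcT', hc1, hcT]; omega
      exact hpT' (by simp only [hT', mem_filter, mem_univ, true_and]; exact this)
  · have hsub : T ⊆ T' := by
      intro x hx
      have hxp : x ≠ p := fun h => hpT (h ▸ hx)
      exact erase_subset p T' (hSS ▸ (mem_erase.mpr ⟨hxp, hx⟩))
    rw [← hcT, ← hcT']; exact Finset.card_le_card hsub


/-- **Case 1 -/
theorem alpha_popular_borda_winner_stays {m k : ℕ} (hm : 2 ≤ m) (hk : 1 ≤ k)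
    (α : ℝ) (hα0 : 0 ≤ α) (hα1 : α ≤ 1)
    (A A' : Profile m k) (p : Fin m)
    (hwin : ∀ q : Fin m, q ≠ p → borda A q < borda A p)
    (hpop : ⌈α * (k : ℝ)⌉₊ ≤ firstCount A p)
    (hraise : IsPRaise p A A') :
    (∀ q : Fin m, q ≠ p → borda A' q < borda A' p) ∧
    ⌈α * (k : ℝ)⌉₊ ≤ firstCount A' p := by
  obtain ⟨i₀, heq, hp, hpres⟩ := hraise
  constructor
  · intro q hq
    have hBq : borda A' q ≤ borda A q := by
      apply Finset.sum_le_sum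
      intro i _
      by_cases hi : i = i₀
      · subst hi
        have := rank_mono (A i) (A' i) p q hq hp hpres
        omega
      · rw [heq i hi]
    have hBp : borda A p ≤ borda A' p := by
      apply Finset.sum_le_sum
      intro i _
      by_cases hi : i = i₀
      · subst hi; omega
      · rw [heq i hi]
    calc borda A' q ≤ borda A q := hBq
      _ < borda A p := hwin q hq
      _ ≤ borda A' p := hBp
  · refine le_trans hpop (Finset.card_le_card ?_)
    intro i hi
    simp only [mem_filter, mem_univ, true_and] at hi ⊢
    by_cases hii : i = i₀
    · subst hii; omega
    · rw [heq i hii]; exact hi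
end

section
/- Fix natural numbers m ≥ 2 and k ≥ 1 and a real λ with 0 ≤ λ < 1. Let Π be a profile of k ballots over m candidates, let p and q be distinct candidates with H(q,Π) − H(p,Π) < (1−λ)/(k·(m−1)), and let Π' be a minimal p-improvement of Π. Then H(p,Π') > H(q,Π'). (Tipping-point step of the theorem that CHB exhibits Fine-Grained Responsiveness: a single minimal improvement flips a sufficiently close race.) -/
open Finset

/-- `A'` is a minimal `p`-improvement of `A` at voter `i₀`: all other ballots are
unchanged, `rank_{i₀}(p) ≥ 2` (so `p` does not move into first place), and ballot
`i₀` is obtained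
by swapping the ranks of `p` and the candidate `qs` ranked immediately above `p`. -/
def IsMinImprove {m k : ℕ} (p : Fin m) (A A' : Profile m k)
    (i₀ : Fin k) (qs : Fin m) : Prop :=
  (∀ i, i ≠ i₀ → A' i = A i) ∧
  2 ≤ ((A i₀) p : ℕ) ∧
  ((A i₀) qs : ℕ) + 1 = ((A i₀) p : ℕ) ∧
  (A' i₀) p = (A i₀) qs ∧
  (A' i₀) qs = (A i₀) p ∧
  ∀ q : Fin m, q ≠ p → q ≠ qs → (A' i₀) q = (A i₀) q

/-- **Tipping-point step of Fine-Grained Responsiveness of CHB.** For `0 ≤ λ < 1`, if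
candidate `p` loses to `q ≠ p` by a hybrid-score margin smaller than the minimal
quantum `(1-λ)/(k*(m-1))`, then after a single minimal `p`-improvement `A'` of `A`,
`p` has strictly greater hybrid score than `q`. -/
theorem tipping_point_fine_grained_responsiveness {m k : ℕ} (hm : 2 ≤ m) (hk : 1 ≤ k)
    (lam : ℝ) (hlam0 : 0 ≤ lam) (hlam1 : lam < 1)
    (A A' : Profile m k) (p q : Fin m) (hpq : q ≠ p)
    (hclose : hybrid lam A q - hybrid lam A p < (1 - lam) / ((k : ℝ) * ((m : ℝ) - 1)))
    (himp : ∃ (i₀ : Fin k) (qs : Fin m), IsMinImprove p A A' i₀ qs) :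
    hybrid lam A' q < hybrid lam A' p := by
  obtain ⟨i₀, qs, hA, hr2, hqsr, hp', hqs', hother⟩ := himp
  have hrlt : ((A i₀) p : ℕ) < m := (A i₀ p).isLt
  have hsplit : ∀ (B : Profile m k) (x : Fin m),
      borda B x = (m - 1 - ((B i₀) x : ℕ)) + ∑ i ∈ univ.erase i₀, (m - 1 - ((B i) x : ℕ)) := by
    intro B x
    rw [borda, ← Finset.add_sum_erase _ _ (mem_univ i₀)]
  have herase : ∀ x : Fin m,
      ∑ i ∈ univ.erase i₀, (m - 1 - ((A' i) x : ℕ)) =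
      ∑ i ∈ univ.erase i₀, (m - 1 - ((A i) x : ℕ)) := by
    intro x
    refine Finset.sum_congr rfl fun i hi => ?_
    rw [hA i (Finset.mem_erase.1 hi).1]
  -- value of q in the changed ballot
  have hqval : ((A' i₀) q : ℕ) = ((A i₀) q : ℕ) ∨
      (((A' i₀) q : ℕ) = ((A i₀) p : ℕ) ∧ ((A i₀) q : ℕ) + 1 = ((A i₀) p : ℕ)) := by
    by_cases h : q = qs
    · subst h
      right
      exact ⟨congrArg Fin.val hqs', hqsr⟩
    · left
      rw [hother q hpq h]
  have hpval : ((A' i₀) p : ℕ) + 1 = ((A i₀) p : ℕ) := by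
    rw [hp']; exact hqsr
  have hbp : borda A' p = borda A p + 1 := by
    rw [hsplit A' p, hsplit A p, herase p]
    omega
  have hbq : borda A' q ≤ borda A q := by
    rw [hsplit A' q, hsplit A q, herase q]
    rcases hqval with h | ⟨h1, h2⟩ <;> omega
  have hfilter : ∀ x : Fin m,
      (((A' i₀) x : ℕ) = 0 ↔ ((A i₀) x : ℕ) = 0) →
      firstCount A' x = firstCount A x := by
    intro x hx
    unfold firstCount
    congr 1
    refine Finset.filter_congr fun i _ => ?_
    by_cases h : i = i₀
    · subst h; exact hx
    · rw [hA i h]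
  have hfp : firstCount A' p = firstCount A p := hfilter p (by omega)
  have hfq : firstCount A' q = firstCount A q := by
    refine hfilter q ?_
    rcases hqval with h | ⟨h1, h2⟩ <;> omega
  have hk0 : (0:ℝ) < (k:ℝ) := by exact_mod_cast Nat.lt_of_lt_of_le Nat.zero_lt_one hk
  have hm1 : (0:ℝ) < (m:ℝ) - 1 := by
    have : (2:ℝ) ≤ (m:ℝ) := by exact_mod_cast hm
    linarith
  have hD : (0:ℝ) < (k:ℝ) * ((m:ℝ) - 1) := mul_pos hk0 hm1
  have heqp : hybrid lam A' p = hybrid lam A p + (1 - lam) / ((k:ℝ) * ((m:ℝ) - 1)) := by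
    unfold hybrid
    rw [hbp, hfp]
    push_cast
    field_simp
    ring
  have hle : hybrid lam A' q ≤ hybrid lam A q := by
    unfold hybrid
    rw [hfq]
    have hb : (borda A' q : ℝ) ≤ (borda A q : ℝ) := by exact_mod_cast hbq
    have h1 : (1 - lam) * (borda A' q : ℝ) ≤ (1 - lam) * (borda A q : ℝ) := by
      apply mul_le_mul_of_nonneg_left hb; linarith
    have h2 : (1 - lam) * (borda A' q : ℝ) / ((k:ℝ) * ((m:ℝ) - 1)) ≤
        (1 - lam) * (borda A q : ℝ) / ((k:ℝ) * ((m:ℝ) - 1)) :=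
      (div_le_div_iff_of_pos_right hD).mpr h1
    linarith
  linarith [heqp, hle, hclose]
end
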